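/- arXiv:2509.06345 — 3 statements merged into one kernel-verified Lean document; each statement's English description precedes it below -/
import Mathlib

section
/- Let G be a 2-connected graph with a longest cycle L, and let B_1, …, B_k be pairwise vertex-disjoint L-bridges of G. For each i, let T_i be a tree contained in B_i with the maximum number of edges whose leaves are exactly the attachments of B_i (so λ(B_i) = |E(T_i)|), and let H be the union of L and T_1, …, T_k. Suppose there exists a collection 𝒞 of cycles of H such that each edge of L lies in exactly two cycles of 𝒞, each edge of H not in L lies in at least four cycles of 𝒞, and for every C ∈ 𝒞, L△C is a cycle. Then λ(B_1) + ⋯ + λ(B_k) ≤ ⌊|E(L)|/2⌋. -/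
open SimpleGraph

variable {V : Type*}

/-- A subgraph is a cycle if it is the subgraph associated to some cycle walk. -/
def IsCycleSubgraph (G : SimpleGraph V) (L : G.Subgraph) : Prop :=
  ∃ (v : V) (w : G.Walk v v), w.IsCycle ∧ L = w.toSubgraph

/-- A longest cycle: a cycle with the maximum number of edges among all cycles. -/
def IsLongestCycle (G : SimpleGraph V) (L : G.Subgraph) : Prop :=
  IsCycleSubgraph G L ∧
    ∀ C : G.Subgraph, IsCycleSubgraph G C → C.edgeSet.ncard ≤ L.edgeSet.ncard

/-- A graph is `2`-connected if it has at least `3` vertices and deleting any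
single vertex leaves a connected graph. -/
def TwoConnected (G : SimpleGraph V) : Prop :=
  3 ≤ Nat.card V ∧ ∀ v : V, ((⊤ : G.Subgraph).deleteVerts {v}).coe.Connected

/-- `B` is an `H`-bridge of `G`: either a single edge of `G` not in `H` with both endpoints
in `V(H)`, or a component `D` of `G - V(H)` together with all edges between `D` and `V(H)`. -/
def IsBridge (G : SimpleGraph V) (H B : G.Subgraph) : Prop :=
  (∃ (u v : V) (huv : G.Adj u v), ¬H.Adj u v ∧ u ∈ H.verts ∧ v ∈ H.verts ∧
    B = G.subgraphOfAdj huv) ∨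
  (∃ D : Set V, D.Nonempty ∧ (∀ d ∈ D, d ∉ H.verts) ∧
    (G.induce D).Connected ∧
    (∀ u ∈ D, ∀ v : V, v ∉ D → v ∉ H.verts → ¬G.Adj u v) ∧
    B.verts = D ∪ {v ∈ H.verts | ∃ u ∈ D, G.Adj u v} ∧
    (∀ x y : V, B.Adj x y ↔ G.Adj x y ∧ (x ∈ D ∨ y ∈ D)))

/-- The attachments of an `H`-bridge `B`. -/
def attachments {G : SimpleGraph V} (H B : G.Subgraph) : Set V :=
  H.verts ∩ B.verts

/-- A subgraph is a path if it is the subgraph associated to some path walk. -/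
def IsPathSubgraph (G : SimpleGraph V) (P : G.Subgraph) : Prop :=
  ∃ (u v : V) (w : G.Walk u v), w.IsPath ∧ P = w.toSubgraph

/-- Two `L`-bridges overlap if `L` cannot be partitioned into two subpaths `L₁`, `L₂`
such that the attachments of `Bᵢ` all lie on `Lᵢ`. -/
def Overlap (G : SimpleGraph V) (L B₁ B₂ : G.Subgraph) : Prop :=
  ¬∃ L₁ L₂ : G.Subgraph, IsPathSubgraph G L₁ ∧ IsPathSubgraph G L₂ ∧
    L₁ ⊔ L₂ = L ∧ L₁.edgeSet ∩ L₂.edgeSet = ∅ ∧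
    attachments L B₁ ⊆ L₁.verts ∧ attachments L B₂ ⊆ L₂.verts

/-- The graph induced on the bridges `B 0, …, B (k-1)` by the overlap relation. -/
def OverlapGraph (G : SimpleGraph V) (L : G.Subgraph) {k : ℕ}
    (B : Fin k → G.Subgraph) : SimpleGraph (Fin k) :=
  SimpleGraph.fromRel fun i j => Overlap G L (B i) (B j)

/-- The leaves of a subgraph: vertices with exactly one neighbour in it. -/
def subLeaves {G : SimpleGraph V} (T : G.Subgraph) : Set V :=
  {v ∈ T.verts | (T.neighborSet v).ncard = 1}

/-- The length `λ(B)` of an `L`-bridge `B`: the maximum number of edges of a tree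
contained in `B` whose leaves are exactly the attachments of `B`. -/
noncomputable def bridgeLength {G : SimpleGraph V} (L B : G.Subgraph) : ℕ :=
  sSup {n | ∃ T : G.Subgraph, T ≤ B ∧ T.coe.IsTree ∧
    subLeaves T = attachments L B ∧ T.edgeSet.ncard = n}

/-- The symmetric difference of two subgraphs: the subgraph induced by the symmetric
difference of the edge sets. -/
def symmDiffSub {G : SimpleGraph V} (H₁ H₂ : G.Subgraph) : G.Subgraph where
  verts := {v | ∃ w, (H₁.Adj v w ∧ ¬H₂.Adj v w) ∨ (H₂.Adj v w ∧ ¬H₁.Adj v w)}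
  Adj v w := (H₁.Adj v w ∧ ¬H₂.Adj v w) ∨ (H₂.Adj v w ∧ ¬H₁.Adj v w)
  adj_sub h := h.elim (fun h' => h'.1.adj_sub) (fun h' => h'.1.adj_sub)
  edge_vert h := ⟨_, h⟩
  symm := ⟨fun v w h => by
    rcases h with ⟨h1, h2⟩ | ⟨h1, h2⟩
    · exact Or.inl ⟨h1.symm, fun hc => h2 hc.symm⟩
    · exact Or.inr ⟨h1.symm, fun hc => h2 hc.symm⟩⟩

/-- `x` lies on the directed segment from `u` to `v` along the arc relation `A`. -/
def InSeg (A : V → V → Prop) (u v x : V) : Prop :=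
  ∃ (m : ℕ) (f : Fin (m + 1) → V), f 0 = u ∧ f (Fin.last m) = v ∧
    (∀ i : Fin m, A (f i.castSucc) (f i.succ)) ∧ ∃ i, f i = x

/-- A directed cycle of `G`: a cycle subgraph together with an orientation of its
edges in which every vertex has exactly one out-neighbour. -/
structure DiCycle (G : SimpleGraph V) where
  C : G.Subgraph
  isCycle : IsCycleSubgraph G C
  Arc : V → V → Prop
  arc_iff : ∀ x y, C.Adj x y ↔ (Arc x y ∨ Arc y x)
  arc_asymm : ∀ x y, Arc x y → ¬Arc y x
  out_unique : ∀ x ∈ C.verts, ∃! y, Arc x y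

/-- `A` is an orientation of the cycle `L` as a directed cycle (e.g. "clockwise"). -/
def IsOrientation {G : SimpleGraph V} (L : G.Subgraph) (A : V → V → Prop) : Prop :=
  (∀ x y, L.Adj x y ↔ (A x y ∨ A y x)) ∧ (∀ x y, A x y → ¬A y x) ∧
  (∀ x ∈ L.verts, ∃! y, A x y) ∧ (∀ x ∈ L.verts, ∃! y, A y x)

/-- The directed cycle `D` is of type `ij` with respect to `a` (with `i j : Bool`,
`i = true` meaning the cycle uses `a⁻` rather than `a⁺`, and `j = true` meaning it
contains the arc `(a,b)` rather than `(b,a)` for the edge `ab` leaving `L`),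
relative to the clockwise orientation `A` of `L`. -/
def DiType {G : SimpleGraph V} (L : G.Subgraph) (A : V → V → Prop)
    (D : DiCycle G) (i j : Bool) (a : V) : Prop :=
  (∃ b, b ∉ L.verts ∧ (if j then D.Arc a b else D.Arc b a)) ∧
  (∃ c, (if i then A c a else A a c) ∧ (if j then D.Arc c a else D.Arc a c))

/-- Conditions (C1)–(C4): a feasible family of directed cycles for `(G, L)`,
relative to the clockwise orientation `A` of `L`. -/
def Feasible (G : SimpleGraph V) (L : G.Subgraph) (A : V → V → Prop)
    (𝒞 : Set (DiCycle G)) : Prop :=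
  (∀ e ∈ L.edgeSet, {D ∈ 𝒞 | e ∈ D.C.edgeSet}.ncard = 2) ∧
  (∀ e ∈ G.edgeSet, e ∉ L.edgeSet → 4 ≤ {D ∈ 𝒞 | e ∈ D.C.edgeSet}.ncard) ∧
  (∀ D ∈ 𝒞, IsCycleSubgraph G (symmDiffSub L D.C)) ∧
  (∀ D ∈ 𝒞, ∀ B : G.Subgraph, IsBridge G L B →
    (D.C.verts ∩ attachments L B).ncard = 0 ∨ (D.C.verts ∩ attachments L B).ncard = 2) ∧
  (∀ (i j : Bool) (x : V), (∃ B : G.Subgraph, IsBridge G L B ∧ x ∈ attachments L B) →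
    ∃! D : DiCycle G, D ∈ 𝒞 ∧ DiType L A D i j x)

open scoped symmDiff Finset

/-! Every edge of a tree `Tᵢ` lies outside `L` and in at least four cycles of `𝒞`, whereas every
edge of `L` lies in exactly two. Since `L` is longest and `L △ C` is a cycle, each `C ∈ 𝒞` has
at most as many edges outside `L` as inside `L`. Double counting the incidences between edges
and cycles gives `4 ∑ |E(Tᵢ)| ≤ ∑_C |E(C) ∖ E(L)| ≤ ∑_C |E(C) ∩ E(L)| = 2 |E(L)|`, and
`λ(Bᵢ) ≤ |E(Tᵢ)|` by the maximality of `Tᵢ`. -/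

theorem Finset.two_mul_card_le_card_of_cover {ι α : Type*} [Fintype ι] [DecidableEq α]
    {L S : Finset α} {C : ι → Finset α} (hSL : Disjoint S L)
    (hshort : ∀ j, #(C j \ L) ≤ #(C j ∩ L))
    (htwo : ∀ e ∈ L, #{j | e ∈ C j} = 2) (hfour : ∀ e ∈ S, 4 ≤ #{j | e ∈ C j}) :
    2 * #S ≤ #L := by
  have hcount : ∀ A : Finset α, ∑ e ∈ A, #{j | e ∈ C j} = ∑ j, #(A ∩ C j) := fun A => by
    simp_rw [← filter_mem_eq_inter]
    exact sum_card_bipartiteAbove_eq_sum_card_bipartiteBelow (fun e j => e ∈ C j)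
  have : #S * 4 ≤ #L * 2 :=
    calc #S * 4 ≤ ∑ e ∈ S, #{j | e ∈ C j} := card_nsmul_le_sum _ _ _ hfour
      _ = ∑ j, #(S ∩ C j) := hcount S
      _ ≤ ∑ j, #(C j \ L) := sum_le_sum fun j _ => card_le_card fun e he =>
          mem_sdiff.mpr ⟨(mem_inter.mp he).2, disjoint_left.mp hSL (mem_inter.mp he).1⟩
      _ ≤ ∑ j, #(C j ∩ L) := sum_le_sum fun j _ => hshort j
      _ = ∑ e ∈ L, #{j | e ∈ C j} := by simp_rw [hcount L, inter_comm]
      _ = #L * 2 := by rw [sum_congr rfl htwo, sum_const, smul_eq_mul]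
  omega

theorem Set.two_mul_ncard_le_ncard_of_cover {ι α : Type*} [Finite ι]
    {L S : Set α} {C : ι → Set α} (hL : L.Finite) (hS : S.Finite) (hC : ∀ j, (C j).Finite)
    (hSL : Disjoint S L) (hshort : ∀ j, (C j \ L).ncard ≤ (C j ∩ L).ncard)
    (htwo : ∀ e ∈ L, {j | e ∈ C j}.ncard = 2) (hfour : ∀ e ∈ S, 4 ≤ {j | e ∈ C j}.ncard) :
    2 * S.ncard ≤ L.ncard := by
  classical
  have := Fintype.ofFinite ι
  lift L to Finset α using hL
  lift S to Finset α using hS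
  choose C' hC' using fun j => (hC j).exists_finset_coe
  obtain rfl : C = fun j => (C' j : Set α) := funext fun j => (hC' j).symm
  have hmult : ∀ e, {j | e ∈ C' j}.ncard = #{j | e ∈ C' j} := fun e => by
    rw [← ncard_coe_finset]
    simp
  simp only [ncard_coe_finset, hmult, ← Finset.coe_sdiff, ← Finset.coe_inter, Finset.mem_coe,
    Finset.disjoint_coe] at *
  exact Finset.two_mul_card_le_card_of_cover hSL hshort htwo hfour

theorem Set.two_mul_sum_ncard_le_ncard_of_cover {κ ι α : Type*} [Fintype κ] [Finite ι]
    {L : Set α} {S : κ → Set α} {C : ι → Set α} (hL : L.Finite) (hC : ∀ j, (C j).Finite)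
    (hSdisj : Pairwise fun i i' => Disjoint (S i) (S i')) (hSL : ∀ i, Disjoint (S i) L)
    (hshort : ∀ j, (C j \ L).ncard ≤ (C j ∩ L).ncard)
    (htwo : ∀ e ∈ L, {j | e ∈ C j}.ncard = 2) (hfour : ∀ i, ∀ e ∈ S i, 4 ≤ {j | e ∈ C j}.ncard) :
    2 * ∑ i, (S i).ncard ≤ L.ncard := by
  have hSfin : ∀ i, (S i).Finite := fun i => (finite_iUnion hC).subset fun e he => by
    obtain ⟨j, hj⟩ : {j | e ∈ C j}.Nonempty :=
      nonempty_of_ncard_ne_zero (by have := hfour i e he; omega)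
    exact mem_iUnion.mpr ⟨j, hj⟩
  rw [← finsum_eq_sum_of_fintype, ← ncard_iUnion_of_finite hSfin hSdisj]
  refine two_mul_ncard_le_ncard_of_cover hL (finite_iUnion hSfin) hC
    (disjoint_iUnion_left.mpr hSL) hshort htwo fun e he => ?_
  obtain ⟨i, hi⟩ := mem_iUnion.mp he
  exact hfour i e hi

theorem Set.ncard_diff_le_ncard_inter_of_ncard_symmDiff_le {α : Type*} {s t : Set α}
    (hs : s.Finite) (ht : t.Finite) (h : (s ∆ t).ncard ≤ s.ncard) :
    (t \ s).ncard ≤ (t ∩ s).ncard := by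
  rw [Set.symmDiff_def, ncard_union_eq disjoint_sdiff_sdiff hs.sdiff ht.sdiff,
    ← ncard_inter_add_ncard_sdiff_eq_ncard s t hs, inter_comm] at h
  omega

variable {G : SimpleGraph V}

theorem IsCycleSubgraph.edgeSet_finite {C : G.Subgraph} (hC : IsCycleSubgraph G C) :
    C.edgeSet.Finite := by
  obtain ⟨v, w, -, rfl⟩ := hC
  rw [Walk.edgeSet_toSubgraph]
  exact w.edges.finite_toSet

theorem symmDiffSub_edgeSet (H₁ H₂ : G.Subgraph) :
    (symmDiffSub H₁ H₂).edgeSet = H₁.edgeSet ∆ H₂.edgeSet := by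
  ext e
  induction e using Sym2.ind
  rfl

theorem IsCycleSubgraph.edgeSet_finite_of_symmDiffSub {L C : G.Subgraph}
    (hL : IsCycleSubgraph G L) (hLC : IsCycleSubgraph G (symmDiffSub L C)) :
    C.edgeSet.Finite := by
  rw [← symmDiff_symmDiff_cancel_left L.edgeSet C.edgeSet, ← symmDiffSub_edgeSet]
  exact hL.edgeSet_finite.symmDiff hLC.edgeSet_finite

theorem IsLongestCycle.ncard_diff_le_ncard_inter {L C : G.Subgraph} (hL : IsLongestCycle G L)
    (hLC : IsCycleSubgraph G (symmDiffSub L C)) :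
    (C.edgeSet \ L.edgeSet).ncard ≤ (C.edgeSet ∩ L.edgeSet).ncard :=
  Set.ncard_diff_le_ncard_inter_of_ncard_symmDiff_le hL.1.edgeSet_finite
    (hL.1.edgeSet_finite_of_symmDiffSub hLC) (symmDiffSub_edgeSet L C ▸ hL.2 _ hLC)

theorem IsBridge.disjoint_edgeSet {L B : G.Subgraph} (hB : IsBridge G L B) :
    Disjoint B.edgeSet L.edgeSet := by
  rcases hB with ⟨u, v, huv, hnadj, -, -, rfl⟩ | ⟨D, -, hDL, -, -, -, hBadj⟩
  · rw [edgeSet_subgraphOfAdj, Set.disjoint_singleton_left]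
    exact hnadj
  · rw [Set.disjoint_left]
    intro e heB heL
    induction e using Sym2.ind with
    | _ x y =>
      rcases ((hBadj x y).mp heB).2 with hx | hy
      exacts [hDL x hx heL.fst_mem, hDL y hy heL.snd_mem]

theorem bridgeLength_le {L B : G.Subgraph} {n : ℕ}
    (h : ∀ T : G.Subgraph, T ≤ B → T.coe.IsTree → subLeaves T = attachments L B →
      T.edgeSet.ncard ≤ n) :
    bridgeLength L B ≤ n :=
  csSup_le' <| by
    rintro _ ⟨T, hTB, hT, hleaves, rfl⟩
    exact h T hTB hT hleaves

theorem reduction_to_covering_general (G : SimpleGraph V) (L : G.Subgraph)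
    (hL : IsLongestCycle G L)
    {k : ℕ} (B T : Fin k → G.Subgraph)
    (hbridge : ∀ i, IsBridge G L (B i))
    (hdisj : ∀ i j, i ≠ j → (B i).verts ∩ (B j).verts = ∅)
    (hTsub : ∀ i, T i ≤ B i)
    (hTmax : ∀ i, ∀ T' : G.Subgraph, T' ≤ B i → T'.coe.IsTree →
      subLeaves T' = attachments L (B i) → T'.edgeSet.ncard ≤ (T i).edgeSet.ncard)
    (m : ℕ) (𝒞 : Fin m → G.Subgraph)
    (htwo : ∀ e ∈ L.edgeSet, {j : Fin m | e ∈ (𝒞 j).edgeSet}.ncard = 2)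
    (hfour : ∀ e ∈ (L ⊔ ⨆ i, T i).edgeSet, e ∉ L.edgeSet →
      4 ≤ {j : Fin m | e ∈ (𝒞 j).edgeSet}.ncard)
    (hsd : ∀ j, IsCycleSubgraph G (symmDiffSub L (𝒞 j))) :
    ∑ i, bridgeLength L (B i) ≤ L.edgeSet.ncard / 2 := by
  have hTL : ∀ i, Disjoint (T i).edgeSet L.edgeSet := fun i =>
    (hbridge i).disjoint_edgeSet.mono_left (Subgraph.edgeSet_mono (hTsub i))
  have hTdisj : Pairwise fun i j => Disjoint (T i).edgeSet (T j).edgeSet := fun i j hij =>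
    ((Subgraph.disjoint_verts_iff_disjoint.mp (Set.disjoint_iff_inter_eq_empty.mpr
      (hdisj i j hij))).mono (hTsub i) (hTsub j)).edgeSet
  have hcount := Set.two_mul_sum_ncard_le_ncard_of_cover hL.1.edgeSet_finite
    (fun j => hL.1.edgeSet_finite_of_symmDiffSub (hsd j)) hTdisj hTL
    (fun j => hL.ncard_diff_le_ncard_inter (hsd j)) htwo fun i e he =>
      hfour e (Subgraph.edgeSet_mono (le_sup_of_le_right (le_iSup T i)) he)
        ((hTL i).notMem_of_mem_left he)
  calc ∑ i, bridgeLength L (B i) ≤ ∑ i, (T i).edgeSet.ncard :=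
        Finset.sum_le_sum fun i _ => bridgeLength_le (hTmax i)
    _ ≤ L.edgeSet.ncard / 2 := by omega

/-- The reduction step: if `L` is a longest cycle of a `2`-connected graph `G`,
`B 1, …, B k` are pairwise vertex-disjoint `L`-bridges, `T i ≤ B i` is a tree with the
maximum number of edges whose leaves are exactly the attachments of `B i`, and the union
`H` of `L` and the `T i` admits a collection of cycles covering each edge of `L` exactly
twice, every other edge of `H` at least four times, with all symmetric differences with
`L` being cycles, then `∑ λ(Bᵢ) ≤ ⌊|E(L)|/2⌋`. -/
theorem reduction_to_covering (G : SimpleGraph V) (L : G.Subgraph)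
    (hG : TwoConnected G) (hL : IsLongestCycle G L)
    {k : ℕ} (hk : 0 < k) (B T : Fin k → G.Subgraph)
    (hbridge : ∀ i, IsBridge G L (B i))
    (hdisj : ∀ i j, i ≠ j → (B i).verts ∩ (B j).verts = ∅)
    (hTsub : ∀ i, T i ≤ B i)
    (hTtree : ∀ i, (T i).coe.IsTree)
    (hTleaves : ∀ i, subLeaves (T i) = attachments L (B i))
    (hTmax : ∀ i, ∀ T' : G.Subgraph, T' ≤ B i → T'.coe.IsTree →
      subLeaves T' = attachments L (B i) → T'.edgeSet.ncard ≤ (T i).edgeSet.ncard)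
    (m : ℕ) (𝒞 : Fin m → G.Subgraph)
    (hcyc : ∀ j, IsCycleSubgraph G (𝒞 j) ∧ 𝒞 j ≤ L ⊔ ⨆ i, T i)
    (htwo : ∀ e ∈ L.edgeSet, {j : Fin m | e ∈ (𝒞 j).edgeSet}.ncard = 2)
    (hfour : ∀ e ∈ (L ⊔ ⨆ i, T i).edgeSet, e ∉ L.edgeSet →
      4 ≤ {j : Fin m | e ∈ (𝒞 j).edgeSet}.ncard)
    (hsd : ∀ j, IsCycleSubgraph G (symmDiffSub L (𝒞 j))) :
    ∑ i, bridgeLength L (B i) ≤ L.edgeSet.ncard / 2 :=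
  reduction_to_covering_general G L hL B T hbridge hdisj hTsub hTmax m 𝒞 htwo hfour hsd
end

section
/- Let η = (p_1, …, p_k) be a k-partition of an integer n ≥ 2. For each arc (u,v) of the multidigraph D_η, there exist two directed cycles of D_η that both contain (u,v) and share no arc other than (u,v). -/
/-- The vertex set of the auxiliary multidigraph `D_η` associated to the
`k`-partition `η = (p 0, …, p (k-1))`: the vertices `v^i_j` for `1 ≤ i ≤ k`,
`1 ≤ j ≤ p i` (here `⟨i, j⟩` stands for `v^(i+1)_(j+1)`). -/
def PartVert (k : ℕ) (p : Fin k → ℕ) : Type :=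
  Σ i : Fin k, Fin (p i)

instance (k : ℕ) (p : Fin k → ℕ) : Fintype (PartVert k p) :=
  Sigma.instFintype

instance (k : ℕ) (p : Fin k → ℕ) : DecidableEq (PartVert k p) :=
  Sigma.instDecidableEqSigma

/-- The multiplicity of the arc `(a, b)` in the multidigraph `D_η`.
For `k = 1` the arcs are `(v^1_j, v^1_{j+1})` and `(v^1_{j+1}, v^1_j)` for
`j = 1, …, n` (indices of the second coordinate taken modulo `n = p 1`).
For `k ≥ 2` the arcs are `(v^i_j, v^i_{j+1})` and `(v^i_{j+1}, v^i_j)` for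
`1 ≤ i ≤ k`, `1 ≤ j ≤ p i - 1`, together with `(v^i_1, v^{i+1}_1)` and
`(v^i_{p i}, v^{i+1}_{p (i+1)})` for `1 ≤ i ≤ k` (upper indices modulo `k`). -/
def arcMult {k : ℕ} (p : Fin k → ℕ) (a b : PartVert k p) : ℕ :=
  if k = 1 then
    (if b.2.val = (a.2.val + 1) % p a.1 then 1 else 0) +
    (if a.2.val = (b.2.val + 1) % p b.1 then 1 else 0)
  else
    (if a.1 = b.1 ∧ (b.2.val = a.2.val + 1 ∨ a.2.val = b.2.val + 1) then 1 else 0) +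
    (if a.2.val = 0 ∧ b.2.val = 0 ∧ b.1.val = (a.1.val + 1) % k then 1 else 0) +
    (if a.2.val = p a.1 - 1 ∧ b.2.val = p b.1 - 1 ∧ b.1.val = (a.1.val + 1) % k
      then 1 else 0)

/-!
The reflection `v^i_j ↦ v^i_{p_i + 1 - j}` of every part is an automorphism of `D_η`: it
reverses the `n`-cycle when `k = 1`, and for `k ≥ 2` it reverses the path arcs and exchanges
the bottom arcs `v^i_1 → v^{i+1}_1` with the top arcs `v^i_{p_i} → v^{i+1}_{p_{i+1}}`. So it
suffices to treat forward arcs of the `n`-cycle, upward path arcs and top arcs.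

For the first two, take the 2-cycle `u → v → u` together with a longer cycle through `(u, v)`:
the `n`-cycle itself, resp. the cycle going up part `i`, along the top arc to part `i + 1`, down
part `i + 1` and back along bottom arcs. A cycle of length at least `3` cannot use both `(u, v)`
and `(v, u)`, and for `n = 2` the arc `(v, u)` is doubled. For a top arc, take the cycle through
all the tops and the same up-and-down cycle; apart from `(u, v)` they can only share arcs that
are bottom and top arcs at once, i.e. arcs between two parts of size one, which are doubled.
-/

open Function

section Cycles
variable {V W : Type*}

def IsDirCycle (μ : V → V → ℕ) {m : ℕ} (c : ZMod m → V) : Prop :=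
  2 ≤ m ∧ Injective c ∧ ∀ t, 1 ≤ μ (c t) (c (t + 1))

def Traverses {m : ℕ} (c : ZMod m → V) (a b : V) : Prop :=
  ∃ t, c t = a ∧ c (t + 1) = b

/-- A pair `(a, b) ≠ (u, v)` may lie on both cycles only if it carries two parallel arcs,
one for each cycle. -/
def TwoCyclesThroughArc (μ : V → V → ℕ) (u v : V) : Prop :=
  ∃ (m₁ m₂ : ℕ) (c₁ : ZMod m₁ → V) (c₂ : ZMod m₂ → V),
    IsDirCycle μ c₁ ∧ IsDirCycle μ c₂ ∧ Traverses c₁ u v ∧ Traverses c₂ u v ∧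
    ∀ a b, ¬(a = u ∧ b = v) → Traverses c₁ a b → Traverses c₂ a b → 2 ≤ μ a b

variable {μ : V → V → ℕ} {ν : W → W → ℕ} {m : ℕ} {c : ZMod m → V} {u v : V}

theorem Traverses.comp (h : Traverses c u v) (σ : V → W) : Traverses (σ ∘ c) (σ u) (σ v) :=
  let ⟨t, hu, hv⟩ := h; ⟨t, congrArg σ hu, congrArg σ hv⟩

theorem Traverses.of_comp {σ : V → W} (hσ : Injective σ) (h : Traverses (σ ∘ c) (σ u) (σ v)) :
    Traverses c u v :=
  let ⟨t, hu, hv⟩ := h; ⟨t, hσ hu, hσ hv⟩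

theorem IsDirCycle.comp {σ : V → W} (hσ : Injective σ) (hν : ∀ a b, ν (σ a) (σ b) = μ a b)
    (hc : IsDirCycle μ c) : IsDirCycle ν (σ ∘ c) :=
  ⟨hc.1, hσ.comp hc.2.1, fun t => (hν _ _).symm ▸ hc.2.2 t⟩

theorem TwoCyclesThroughArc.map {σ : V → W} (hσ : Injective σ)
    (hν : ∀ a b, ν (σ a) (σ b) = μ a b) (h : TwoCyclesThroughArc μ u v) :
    TwoCyclesThroughArc ν (σ u) (σ v) := by
  obtain ⟨m₁, m₂, c₁, c₂, hc₁, hc₂, hu₁, hu₂, hdisj⟩ := h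
  refine ⟨m₁, m₂, σ ∘ c₁, σ ∘ c₂, hc₁.comp hσ hν, hc₂.comp hσ hν, hu₁.comp σ, hu₂.comp σ, ?_⟩
  rintro _ _ hne ⟨t, rfl, rfl⟩ h₂
  rw [comp_apply, comp_apply, hν]
  exact hdisj _ _ (fun ⟨ha, hb⟩ => hne ⟨congrArg σ ha, congrArg σ hb⟩) ⟨t, rfl, rfl⟩
    (h₂.of_comp hσ)

theorem IsDirCycle.ne_of_traverses (hc : IsDirCycle μ c) (h : Traverses c u v) : u ≠ v := by
  obtain ⟨hm, hinj, -⟩ := hc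
  obtain ⟨t, rfl, hv⟩ := h
  intro heq
  have h1 : ((1 : ℕ) : ZMod m) = 0 := by
    simpa using (hinj (hv.trans heq.symm) : t + 1 = t)
  have := Nat.le_of_dvd one_pos ((ZMod.natCast_eq_zero_iff 1 m).1 h1)
  omega

theorem IsDirCycle.not_traverses_swap (hc : IsDirCycle μ c) (hm : 3 ≤ m) (h : Traverses c u v) :
    ¬Traverses c v u := by
  obtain ⟨t, rfl, rfl⟩ := h
  rintro ⟨s, hs, hs'⟩
  have e₁ : s = t + 1 := hc.2.1 hs
  have e₂ : s + 1 = t := hc.2.1 hs'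
  have h2 : ((2 : ℕ) : ZMod m) = 0 := by
    rw [e₁] at e₂
    push_cast
    linear_combination e₂
  have := Nat.le_of_dvd two_pos ((ZMod.natCast_eq_zero_iff 2 m).1 h2)
  omega

def pairCycle (u v : V) : ZMod 2 → V := ![u, v]

theorem isDirCycle_pairCycle (huv : u ≠ v) (h₁ : 1 ≤ μ u v) (h₂ : 1 ≤ μ v u) :
    IsDirCycle μ (pairCycle u v) := by
  refine ⟨le_rfl, ?_, ?_⟩
  · intro s t h
    fin_cases s <;> fin_cases t <;> first | rfl | exact absurd h huv | exact absurd h.symm huv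
  · intro t
    fin_cases t
    exacts [h₁, h₂]

theorem traverses_pairCycle {a b : V} (h : Traverses (pairCycle u v) a b) :
    (a = u ∧ b = v) ∨ (a = v ∧ b = u) := by
  obtain ⟨t, rfl, rfl⟩ := h
  fin_cases t
  exacts [Or.inl ⟨rfl, rfl⟩, Or.inr ⟨rfl, rfl⟩]

/-- A cycle through `(u, v)` together with the `2`-cycle `u → v → u`. -/
theorem TwoCyclesThroughArc.of_isDirCycle (hc : IsDirCycle μ c) (huv : Traverses c u v)
    (hvu : 1 ≤ μ v u) (hrev : Traverses c v u → 2 ≤ μ v u) : TwoCyclesThroughArc μ u v := by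
  have hne := hc.ne_of_traverses huv
  have h₁ : 1 ≤ μ u v := by obtain ⟨t, rfl, rfl⟩ := huv; exact hc.2.2 t
  refine ⟨m, 2, c, pairCycle u v, hc, isDirCycle_pairCycle hne h₁ hvu, huv, ⟨0, rfl, rfl⟩, ?_⟩
  intro a b hab hca hpa
  rcases traverses_pairCycle hpa with h | ⟨rfl, rfl⟩
  exacts [absurd h hab, hrev hca]

def cycleOf (f : ℕ → V) (m : ℕ) : ZMod m → V := fun t => f t.val

section CycleOf
variable {f : ℕ → V}

theorem cycleOf_natCast {s : ℕ} (hs : s < m) : cycleOf f m s = f s :=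
  congrArg f (ZMod.val_natCast_of_lt hs)

theorem cycleOf_add_one [NeZero m] (hf : f m = f 0) (t : ZMod m) :
    cycleOf f m (t + 1) = f (t.val + 1) := by
  have ht := ZMod.val_lt t
  unfold cycleOf
  rw [ZMod.val_add, ZMod.val_one_eq_one_mod, Nat.add_mod_mod]
  rcases (Nat.succ_le_of_lt ht).lt_or_eq with h | h
  · rw [Nat.mod_eq_of_lt h]
  · rw [show t.val + 1 = m from h, Nat.mod_self, hf]

theorem traverses_cycleOf_iff [NeZero m] (hf : f m = f 0) {a b : V} :
    Traverses (cycleOf f m) a b ↔ ∃ s < m, f s = a ∧ f (s + 1) = b := by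
  constructor
  · rintro ⟨t, rfl, rfl⟩
    exact ⟨t.val, ZMod.val_lt t, rfl, (cycleOf_add_one hf t).symm⟩
  · rintro ⟨s, hs, rfl, rfl⟩
    refine ⟨s, cycleOf_natCast hs, ?_⟩
    rw [cycleOf_add_one hf, ZMod.val_natCast_of_lt hs]

theorem isDirCycle_cycleOf (hm : 2 ≤ m) (hf : f m = f 0) (hinj : Set.InjOn f (Set.Iio m))
    (harc : ∀ s < m, 1 ≤ μ (f s) (f (s + 1))) : IsDirCycle μ (cycleOf f m) := by
  have : NeZero m := ⟨by omega⟩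
  refine ⟨hm, fun s t hst => ZMod.val_injective m (hinj (ZMod.val_lt s) (ZMod.val_lt t) hst), ?_⟩
  intro t
  rw [cycleOf_add_one hf]
  exact harc _ (ZMod.val_lt t)

end CycleOf

end Cycles

theorem mod_add_injOn (x N : ℕ) : Set.InjOn (fun d => (x + d) % N) (Set.Iio N) :=
  fun _ hd _ hd' h => (Nat.ModEq.add_left_cancel' x h).eq_of_lt_of_lt hd hd'

theorem add_succ_mod (x s N : ℕ) : (x + (s + 1)) % N = ((x + s) % N + 1) % N := by
  rw [Nat.mod_add_mod, add_assoc]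

theorem eq_add_one_mod_iff {x y N : ℕ} (hx : x < N) (hy : y < N) :
    y = (x + 1) % N ↔ y = x + 1 ∨ x + 1 = N ∧ y = 0 := by
  rcases (Nat.succ_le_of_lt hx).lt_or_eq with h | h
  · rw [Nat.mod_eq_of_lt h]; omega
  · rw [show x + 1 = N from h, Nat.mod_self]; omega

namespace PartVert
variable {k : ℕ} {p : Fin k → ℕ}

theorem ext {a b : PartVert k p} (h₁ : a.1 = b.1) (h₂ : a.2.val = b.2.val) : a = b := by
  obtain ⟨i, x⟩ := a
  obtain ⟨j, y⟩ := b
  subst h₁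
  exact congrArg (Sigma.mk i) (Fin.ext h₂)

def rev (a : PartVert k p) : PartVert k p := ⟨a.1, a.2.rev⟩

@[simp] theorem rev_fst (a : PartVert k p) : a.rev.1 = a.1 := rfl

@[simp] theorem rev_snd_val (a : PartVert k p) : a.rev.2.val = p a.1 - (a.2.val + 1) :=
  Fin.val_rev _

theorem rev_rev (a : PartVert k p) : a.rev.rev = a :=
  congrArg (Sigma.mk a.1) a.2.rev_rev

theorem rev_injective : Function.Injective (rev : PartVert k p → PartVert k p) :=
  Function.LeftInverse.injective rev_rev

end PartVert

open PartVert

section Arcs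
variable {k : ℕ} {p : Fin k → ℕ}

def IsCyclicSucc (a b : PartVert k p) : Prop := b.2.val = (a.2.val + 1) % p a.1

def IsPathArc (a b : PartVert k p) : Prop :=
  a.1 = b.1 ∧ (b.2.val = a.2.val + 1 ∨ a.2.val = b.2.val + 1)

def IsBottomArc (a b : PartVert k p) : Prop :=
  a.2.val = 0 ∧ b.2.val = 0 ∧ b.1.val = (a.1.val + 1) % k

def IsTopArc (a b : PartVert k p) : Prop :=
  a.2.val = p a.1 - 1 ∧ b.2.val = p b.1 - 1 ∧ b.1.val = (a.1.val + 1) % k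

theorem one_le_arcMult_iff_of_eq_one (hk : k = 1) {a b : PartVert k p} :
    1 ≤ arcMult p a b ↔ IsCyclicSucc a b ∨ IsCyclicSucc b a := by
  unfold arcMult IsCyclicSucc
  rw [if_pos hk]
  split_ifs <;> omega

theorem two_le_arcMult_of_eq_one (hk : k = 1) {a b : PartVert k p} (hab : IsCyclicSucc a b)
    (hba : IsCyclicSucc b a) : 2 ≤ arcMult p a b := by
  unfold IsCyclicSucc at hab hba
  unfold arcMult
  split_ifs
  omega

theorem one_le_arcMult_iff (hk : k ≠ 1) {a b : PartVert k p} :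
    1 ≤ arcMult p a b ↔ IsPathArc a b ∨ IsBottomArc a b ∨ IsTopArc a b := by
  unfold arcMult IsPathArc IsBottomArc IsTopArc
  rw [if_neg hk]
  split_ifs <;> omega

theorem two_le_arcMult (hk : k ≠ 1) {a b : PartVert k p} (hbot : IsBottomArc a b)
    (htop : IsTopArc a b) : 2 ≤ arcMult p a b := by
  unfold IsBottomArc at hbot
  unfold IsTopArc at htop
  unfold arcMult
  split_ifs <;> omega

theorem isCyclicSucc_rev_iff (hk : k = 1) {a b : PartVert k p} :
    IsCyclicSucc a.rev b.rev ↔ IsCyclicSucc b a := by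
  subst hk
  have hp : p a.1 = p b.1 := congrArg p (Subsingleton.elim _ _)
  have := a.2.isLt
  have := b.2.isLt
  simp only [IsCyclicSucc, rev_snd_val, rev_fst]
  rw [eq_add_one_mod_iff (by omega) (by omega), eq_add_one_mod_iff (by omega) (by omega)]
  omega

theorem isPathArc_rev_iff {a b : PartVert k p} : IsPathArc a.rev b.rev ↔ IsPathArc a b := by
  simp only [IsPathArc, rev_snd_val, rev_fst]
  refine and_congr_right fun h => ?_
  have := congrArg p h
  have := a.2.isLt
  have := b.2.isLt
  omega

theorem isBottomArc_rev_iff {a b : PartVert k p} : IsBottomArc a.rev b.rev ↔ IsTopArc a b := by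
  have := a.2.isLt
  have := b.2.isLt
  simp only [IsBottomArc, IsTopArc, rev_snd_val, rev_fst]
  omega

theorem isTopArc_rev_iff {a b : PartVert k p} : IsTopArc a.rev b.rev ↔ IsBottomArc a b := by
  have := a.2.isLt
  have := b.2.isLt
  simp only [IsBottomArc, IsTopArc, rev_snd_val, rev_fst]
  omega

theorem arcMult_rev (a b : PartVert k p) : arcMult p a.rev b.rev = arcMult p a b := by
  by_cases hk : k = 1
  · have h₁ := isCyclicSucc_rev_iff hk (a := a) (b := b)
    have h₂ := isCyclicSucc_rev_iff hk (a := b) (b := a)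
    unfold IsCyclicSucc at h₁ h₂
    unfold arcMult
    simp only [if_pos hk, h₁, h₂]
    omega
  · have hP := isPathArc_rev_iff (a := a) (b := b)
    have hB := isBottomArc_rev_iff (a := a) (b := b)
    have hT := isTopArc_rev_iff (a := a) (b := b)
    unfold IsPathArc at hP
    unfold IsBottomArc IsTopArc at hB hT
    unfold arcMult
    simp only [if_neg hk, hP, hB, hT]
    omega

theorem TwoCyclesThroughArc.of_rev {u v : PartVert k p}
    (h : TwoCyclesThroughArc (arcMult p) u.rev v.rev) : TwoCyclesThroughArc (arcMult p) u v := by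
  simpa only [rev_rev] using h.map rev_injective arcMult_rev

end Arcs

section OnePart
variable {p : Fin 1 → ℕ}

def cyclicWalk (u : PartVert 1 p) (s : ℕ) : PartVert 1 p :=
  ⟨u.1, (u.2.val + s) % p u.1, Nat.mod_lt _ u.2.pos⟩

theorem isDirCycle_cyclicWalk (hp : 2 ≤ p 0) (u : PartVert 1 p) :
    IsDirCycle (arcMult p) (cycleOf (cyclicWalk u) (p u.1)) := by
  refine isDirCycle_cycleOf (Fin.fin_one_eq_zero u.1 ▸ hp) ?_ ?_ ?_
  · exact PartVert.ext rfl (by simp [cyclicWalk])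
  · exact fun s hs t ht h => mod_add_injOn _ _ hs ht (congrArg (fun a => a.2.val) h)
  · intro s _
    exact (one_le_arcMult_iff_of_eq_one rfl).2 (Or.inl (add_succ_mod _ _ _))

theorem twoCyclesThroughArc_of_isCyclicSucc (hp : 2 ≤ p 0) {u v : PartVert 1 p}
    (huv : IsCyclicSucc u v) : TwoCyclesThroughArc (arcMult p) u v := by
  have hn : 2 ≤ p u.1 := Fin.fin_one_eq_zero u.1 ▸ hp
  have : NeZero (p u.1) := ⟨by omega⟩
  have hper : cyclicWalk u (p u.1) = cyclicWalk u 0 := PartVert.ext rfl (by simp [cyclicWalk])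
  refine TwoCyclesThroughArc.of_isDirCycle (isDirCycle_cyclicWalk hp u) ?_
    ((one_le_arcMult_iff_of_eq_one rfl).2 (Or.inr huv)) ?_
  · refine (traverses_cycleOf_iff hper).2 ⟨0, by omega, ?_, ?_⟩
    · exact PartVert.ext rfl (by simp [cyclicWalk, Nat.mod_eq_of_lt u.2.isLt])
    · exact PartVert.ext (Subsingleton.elim _ _) huv.symm
  · intro hvu
    obtain ⟨s, -, hs, hs'⟩ := (traverses_cycleOf_iff hper).1 hvu
    have hstep : IsCyclicSucc (cyclicWalk u s) (cyclicWalk u (s + 1)) := add_succ_mod _ _ _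
    rw [hs, hs'] at hstep
    exact two_le_arcMult_of_eq_one rfl hstep huv

theorem twoCyclesThroughArc_of_eq_one (hp : 2 ≤ p 0) {u v : PartVert 1 p}
    (huv : 1 ≤ arcMult p u v) : TwoCyclesThroughArc (arcMult p) u v := by
  rcases (one_le_arcMult_iff_of_eq_one rfl).1 huv with h | h
  · exact twoCyclesThroughArc_of_isCyclicSucc hp h
  · exact .of_rev (twoCyclesThroughArc_of_isCyclicSucc hp ((isCyclicSucc_rev_iff rfl).2 h))

end OnePart

section SeveralParts
variable {k : ℕ} {p : Fin k → ℕ}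

def shift (i : Fin k) (d : ℕ) : Fin k := ⟨(i.val + d) % k, Nat.mod_lt _ i.pos⟩

theorem shift_zero (i : Fin k) : shift i 0 = i := Fin.ext (Nat.mod_eq_of_lt i.isLt)

theorem shift_self (i : Fin k) : shift i k = i :=
  Fin.ext (by simp [shift, Nat.mod_eq_of_lt i.isLt])

theorem shift_succ_val (i : Fin k) (d : ℕ) : (shift i (d + 1)).val = ((shift i d).val + 1) % k :=
  add_succ_mod _ _ _

theorem shift_injOn (i : Fin k) : Set.InjOn (shift i) (Set.Iio k) :=
  fun _ hd _ hd' h => mod_add_injOn _ _ hd hd' (congrArg Fin.val h)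

theorem IsPathArc.not_isTopArc (hk : 2 ≤ k) {a b : PartVert k p} (hpath : IsPathArc a b) :
    ¬IsTopArc a b := by
  rintro ⟨-, -, hsucc⟩
  rw [eq_add_one_mod_iff a.1.isLt b.1.isLt] at hsucc
  have := congrArg Fin.val hpath.1
  omega

section Walks
variable (hp : ∀ i, 1 ≤ p i)

def top (i : Fin k) : PartVert k p := ⟨i, p i - 1, by have := hp i; omega⟩

theorem isTopArc_top_shift (i : Fin k) (d : ℕ) :
    IsTopArc (top hp (shift i d)) (top hp (shift i (d + 1))) :=
  ⟨rfl, rfl, shift_succ_val i d⟩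

def topWalk (i : Fin k) (s : ℕ) : PartVert k p := top hp (shift i s)

theorem topWalk_length (i : Fin k) : topWalk hp i k = topWalk hp i 0 := by
  simp only [topWalk, shift_self, shift_zero]

theorem isDirCycle_topWalk (hk : 2 ≤ k) (i : Fin k) :
    IsDirCycle (arcMult p) (cycleOf (topWalk hp i) k) :=
  isDirCycle_cycleOf hk (topWalk_length hp i)
    (fun _ hs _ ht h => shift_injOn i hs ht (congrArg Sigma.fst h))
    fun s _ => (one_le_arcMult_iff (by omega)).2 (Or.inr (Or.inr (isTopArc_top_shift hp i s)))

variable (p) in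
def upDownOffset (i : Fin k) (s : ℕ) : ℕ :=
  if s < p i then 0 else if s < p i + p (shift i 1) then 1 else s - (p i + p (shift i 1)) + 2

variable (p) in
def upDownHeight (i : Fin k) (s : ℕ) : ℕ :=
  if s < p i then s else if s < p i + p (shift i 1) then p i + p (shift i 1) - 1 - s else 0

variable (p) in
def upDownLength (i : Fin k) : ℕ := p i + p (shift i 1) + (k - 2)

/-- Up part `i`, along the top arc to part `i + 1`, down part `i + 1`, and back to the
bottom of part `i` along the bottoms of the parts `i + 2, …, i + k - 1`; at step `s` it is in
part `i + upDownOffset p i s`, at height `upDownHeight p i s`. -/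
def upDownWalk (i : Fin k) (s : ℕ) : PartVert k p :=
  ⟨shift i (upDownOffset p i s), upDownHeight p i s, by
    unfold upDownOffset upDownHeight
    split_ifs
    · rwa [shift_zero]
    · omega
    · exact hp _⟩

theorem upDownWalk_of_lt {i : Fin k} {s : ℕ} (hs : s < p i) :
    upDownWalk hp i s = ⟨i, s, hs⟩ :=
  PartVert.ext (by simp [upDownWalk, upDownOffset, hs, shift_zero])
    (by simp [upDownWalk, upDownHeight, hs])

theorem upDownWalk_top (i : Fin k) :
    upDownWalk hp i (p i - 1) = top hp i ∧ upDownWalk hp i (p i) = top hp (shift i 1) := by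
  have := hp i
  have := hp (shift i 1)
  refine ⟨(upDownWalk_of_lt hp (by omega)).trans rfl, PartVert.ext ?_ ?_⟩
  · simp [upDownWalk, upDownOffset, top, show 0 < p (shift i 1) by omega]
  · simp only [upDownWalk, upDownHeight, top]
    split_ifs <;> omega

theorem upDownWalk_length (hk : 2 ≤ k) (i : Fin k) :
    upDownWalk hp i (upDownLength p i) = upDownWalk hp i 0 := by
  have := hp i
  refine PartVert.ext ?_ ?_
  · simp only [upDownWalk, upDownOffset, upDownLength]
    rw [if_neg (by omega), if_neg (by omega), if_pos (by omega), shift_zero,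
      show p i + p (shift i 1) + (k - 2) - (p i + p (shift i 1)) + 2 = k by omega, shift_self]
  · simp only [upDownWalk, upDownHeight, upDownLength]
    split_ifs <;> omega

theorem upDownWalk_injOn (hk : 2 ≤ k) (i : Fin k) :
    Set.InjOn (upDownWalk hp i) (Set.Iio (upDownLength p i)) := by
  intro s hs t ht h
  have hlt : ∀ s < upDownLength p i, upDownOffset p i s < k := by
    intro s hs
    simp only [upDownOffset, upDownLength] at hs ⊢
    split_ifs <;> omega
  have hoff := shift_injOn i (hlt s hs) (hlt t ht) (congrArg Sigma.fst h)
  have hheight : upDownHeight p i s = upDownHeight p i t := congrArg (fun a => a.2.val) h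
  simp only [upDownOffset, upDownHeight, upDownLength, Set.mem_Iio] at *
  split_ifs at * <;> omega

theorem upDownWalk_arc (i : Fin k) (s : ℕ) :
    s + 1 = p i ∨ IsPathArc (upDownWalk hp i s) (upDownWalk hp i (s + 1)) ∨
      IsBottomArc (upDownWalk hp i s) (upDownWalk hp i (s + 1)) := by
  simp only [IsPathArc, IsBottomArc, upDownWalk, upDownOffset, upDownHeight]
  split_ifs <;> first
    | omega
    | exact Or.inr (Or.inl ⟨rfl, by omega⟩)
    | refine Or.inr (Or.inr ⟨by omega, rfl, ?_⟩)
      rw [← shift_succ_val]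
      exact congrArg (fun d => (shift i d).val) (by omega)

theorem isDirCycle_upDownWalk (hk : 2 ≤ k) (i : Fin k) :
    IsDirCycle (arcMult p) (cycleOf (upDownWalk hp i) (upDownLength p i)) := by
  have := hp i
  have := hp (shift i 1)
  refine isDirCycle_cycleOf (by unfold upDownLength; omega) (upDownWalk_length hp hk i)
    (upDownWalk_injOn hp hk i) fun s hs => (one_le_arcMult_iff (by omega)).2 ?_
  rcases upDownWalk_arc hp i s with hs | hpath | hbot
  · obtain rfl : s = p i - 1 := by omega
    rw [hs, (upDownWalk_top hp i).1, (upDownWalk_top hp i).2]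
    exact Or.inr (Or.inr (by simpa [shift_zero] using isTopArc_top_shift hp i 0))
  · exact Or.inl hpath
  · exact Or.inr (Or.inl hbot)

end Walks

theorem twoCyclesThroughArc_of_upArc (hk : 2 ≤ k) (hp : ∀ i, 1 ≤ p i) {u v : PartVert k p}
    (he : u.1 = v.1) (hup : v.2.val = u.2.val + 1) : TwoCyclesThroughArc (arcMult p) u v := by
  have hv : v.2.val < p u.1 := by have := v.2.isLt; have := congrArg p he; omega
  have := hp (shift u.1 1)
  have hc := isDirCycle_upDownWalk hp hk u.1
  have hm : 3 ≤ upDownLength p u.1 := by unfold upDownLength; omega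
  have : NeZero (upDownLength p u.1) := ⟨by omega⟩
  have huv : Traverses (cycleOf (upDownWalk hp u.1) (upDownLength p u.1)) u v := by
    refine (traverses_cycleOf_iff (upDownWalk_length hp hk u.1)).2
      ⟨u.2.val, by unfold upDownLength; omega, ?_, ?_⟩
    · exact (upDownWalk_of_lt hp u.2.isLt).trans (PartVert.ext rfl rfl)
    · rw [upDownWalk_of_lt hp (by omega)]
      exact PartVert.ext he hup.symm
  exact .of_isDirCycle hc huv ((one_le_arcMult_iff (by omega)).2 (Or.inl ⟨he.symm, Or.inr hup⟩))
    fun hvu => absurd hvu (hc.not_traverses_swap hm huv)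

theorem twoCyclesThroughArc_of_isTopArc (hk : 2 ≤ k) (hp : ∀ i, 1 ≤ p i) {u v : PartVert k p}
    (huv : IsTopArc u v) : TwoCyclesThroughArc (arcMult p) u v := by
  have : NeZero k := ⟨by omega⟩
  have : NeZero (upDownLength p u.1) := ⟨by have := hp u.1; unfold upDownLength; omega⟩
  have hu : top hp u.1 = u := PartVert.ext rfl huv.1.symm
  have hv₁ : shift u.1 1 = v.1 := Fin.ext huv.2.2.symm
  have hv : top hp (shift u.1 1) = v :=
    PartVert.ext hv₁ (by rw [huv.2.1]; exact congrArg (p · - 1) hv₁)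
  refine ⟨k, upDownLength p u.1, _, _, isDirCycle_topWalk hp hk u.1,
    isDirCycle_upDownWalk hp hk u.1,
    (traverses_cycleOf_iff (topWalk_length hp u.1)).2 ⟨0, by omega, ?_, hv⟩,
    (traverses_cycleOf_iff (upDownWalk_length hp hk u.1)).2
      ⟨p u.1 - 1, by have := hp u.1; unfold upDownLength; omega,
        (upDownWalk_top hp u.1).1.trans hu, ?_⟩, ?_⟩
  · rw [topWalk, shift_zero, hu]
  · rw [Nat.sub_add_cancel (hp u.1)]
    exact (upDownWalk_top hp u.1).2.trans hv
  intro a b hne h₁ h₂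
  obtain ⟨s, -, rfl, rfl⟩ := (traverses_cycleOf_iff (topWalk_length hp u.1)).1 h₁
  obtain ⟨t, -, ht, ht'⟩ := (traverses_cycleOf_iff (upDownWalk_length hp hk u.1)).1 h₂
  have htop := isTopArc_top_shift hp u.1 s
  rcases upDownWalk_arc hp u.1 t with hti | hpath | hbot
  · obtain rfl : t = p u.1 - 1 := by omega
    rw [(upDownWalk_top hp u.1).1, hu] at ht
    rw [hti, (upDownWalk_top hp u.1).2, hv] at ht'
    exact absurd ⟨ht.symm, ht'.symm⟩ hne
  · rw [ht, ht'] at hpath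
    exact absurd htop (hpath.not_isTopArc hk)
  · rw [ht, ht'] at hbot
    exact two_le_arcMult (by omega) hbot htop

theorem twoCyclesThroughArc_of_two_le (hk : 2 ≤ k) (hp : ∀ i, 1 ≤ p i) {u v : PartVert k p}
    (huv : 1 ≤ arcMult p u v) : TwoCyclesThroughArc (arcMult p) u v := by
  rcases (one_le_arcMult_iff (by omega)).1 huv with ⟨he, hup | hdown⟩ | hbot | htop
  · exact twoCyclesThroughArc_of_upArc hk hp he hup
  · refine .of_rev (twoCyclesThroughArc_of_upArc hk hp he ?_)
    have := congrArg p he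
    have := u.2.isLt
    simp only [rev_snd_val]
    omega
  · exact .of_rev (twoCyclesThroughArc_of_isTopArc hk hp (isTopArc_rev_iff.2 hbot))
  · exact twoCyclesThroughArc_of_isTopArc hk hp htop

end SeveralParts

theorem Deta_two_cycles_through_arc_general (n k : ℕ) (hn : 2 ≤ n) (p : Fin k → ℕ)
    (hp : ∀ i, 1 ≤ p i) (hsum : ∑ i, p i = n)
    (u v : PartVert k p) (huv : 1 ≤ arcMult p u v) :
    ∃ (m₁ m₂ : ℕ) (c₁ : ZMod m₁ → PartVert k p) (c₂ : ZMod m₂ → PartVert k p),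
      2 ≤ m₁ ∧ 2 ≤ m₂ ∧ Function.Injective c₁ ∧ Function.Injective c₂ ∧
      (∀ t : ZMod m₁, 1 ≤ arcMult p (c₁ t) (c₁ (t + 1))) ∧
      (∀ t : ZMod m₂, 1 ≤ arcMult p (c₂ t) (c₂ (t + 1))) ∧
      (∃ t : ZMod m₁, c₁ t = u ∧ c₁ (t + 1) = v) ∧
      (∃ t : ZMod m₂, c₂ t = u ∧ c₂ (t + 1) = v) ∧
      (∀ a b : PartVert k p, ¬(a = u ∧ b = v) →
        (∃ t : ZMod m₁, c₁ t = a ∧ c₁ (t + 1) = b) →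
        (∃ t : ZMod m₂, c₂ t = a ∧ c₂ (t + 1) = b) →
        2 ≤ arcMult p a b) := by
  have key : TwoCyclesThroughArc (arcMult p) u v := by
    rcases k with _ | _ | k
    · exact u.1.elim0
    · exact twoCyclesThroughArc_of_eq_one (by rw [Fin.sum_univ_one] at hsum; omega) huv
    · exact twoCyclesThroughArc_of_two_le (by omega) hp huv
  obtain ⟨m₁, m₂, c₁, c₂, ⟨hm₁, hi₁, ha₁⟩, ⟨hm₂, hi₂, ha₂⟩, hu₁, hu₂, hdisj⟩ := key
  exact ⟨m₁, m₂, c₁, c₂, hm₁, hm₂, hi₁, hi₂, ha₁, ha₂, hu₁, hu₂, hdisj⟩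

/-- For each arc `(u, v)` of `D_η` there are two directed cycles both containing
`(u, v)` and sharing no arc other than `(u, v)`.  A directed cycle is modelled as an
injective map `c : ZMod m → PartVert k p` (`m ≥ 2`) whose consecutive values are
joined by arcs; two cycles traversing a common pair `(a, b) ≠ (u, v)` is permitted
only when `(a, b)` carries at least two parallel arcs. -/
theorem Deta_two_cycles_through_arc (n k : ℕ) (hn : 2 ≤ n)
    (hk : 1 ≤ k) (hkn : k ≤ n) (p : Fin k → ℕ)
    (hp : ∀ i, 1 ≤ p i) (hsum : ∑ i, p i = n)
    (u v : PartVert k p) (huv : 1 ≤ arcMult p u v) :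
    ∃ (m₁ m₂ : ℕ) (c₁ : ZMod m₁ → PartVert k p) (c₂ : ZMod m₂ → PartVert k p),
      2 ≤ m₁ ∧ 2 ≤ m₂ ∧ Function.Injective c₁ ∧ Function.Injective c₂ ∧
      (∀ t : ZMod m₁, 1 ≤ arcMult p (c₁ t) (c₁ (t + 1))) ∧
      (∀ t : ZMod m₂, 1 ≤ arcMult p (c₂ t) (c₂ (t + 1))) ∧
      (∃ t : ZMod m₁, c₁ t = u ∧ c₁ (t + 1) = v) ∧
      (∃ t : ZMod m₂, c₂ t = u ∧ c₂ (t + 1) = v) ∧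
      (∀ a b : PartVert k p, ¬(a = u ∧ b = v) →
        (∃ t : ZMod m₁, c₁ t = a ∧ c₁ (t + 1) = b) →
        (∃ t : ZMod m₂, c₂ t = a ∧ c₂ (t + 1) = b) →
        2 ≤ arcMult p a b) :=
  Deta_two_cycles_through_arc_general n k hn p hp hsum u v huv
end

section
/- Let η be a k-partition of an integer n ≥ 2, with 1 ≤ k ≤ n. For every nonempty proper subset X ⊊ V(D_η), the number of edges of the underlying multigraph G_η with one endpoint in X and the other endpoint in V(D_η)∖X is at least 4. -/
/-!
For `k ≥ 2`, `G_η` is the union of the `k` paths `v^i_1 ⋯ v^i_{p_i}` with every edge doubled, the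
cycle through the first vertices and the cycle through the last vertices; for `k = 1` it is a
doubled `n`-cycle. A cycle meeting both `X` and its complement crosses the cut at least twice, and
a doubled edge that crosses it counts twice. So if both end cycles change colour we are done; if
only one does, some path has ends of different colours; if neither does, then either every path
has ends of different colours (take two of them), or all ends share one colour and the path
through a vertex of the other colour leaves that colour and returns to it.
-/

open Finset

open Fin.NatCast in
theorem Fin.exists_cycle_step {N : ℕ} [NeZero N] {P : Fin N → Prop} {a b : Fin N}
    (ha : P a) (hb : ¬P b) : ∃ l, P l ∧ ¬P (l + 1) := by
  by_contra! h
  have hreach : ∀ t : ℕ, P (a + t) := by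
    intro t
    induction t with
    | zero => simpa using ha
    | succ t ih => simpa [add_assoc] using h _ ih
  exact hb (by simpa using hreach (b - a).val)

theorem Fin.exists_succ_step_of_le {m : ℕ} {P : Fin m → Prop} {a b : Fin m} (hab : a ≤ b)
    (h : ¬(P a ↔ P b)) :
    ∃ j j' : Fin m, a ≤ j ∧ j' ≤ b ∧ j'.val = j.val + 1 ∧ ¬(P j ↔ P j') := by
  by_contra! H
  have hreach : ∀ d : ℕ, ∀ j : Fin m, j.val = a.val + d → j ≤ b → (P a ↔ P j) := by
    intro d
    induction d with
    | zero => intro j hj _; rw [Fin.ext hj]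
    | succ d ih =>
      intro j hj hjb
      have hd : a.val + d < m := by omega
      exact (ih ⟨_, hd⟩ rfl (Fin.le_def.2 (by dsimp only; omega))).trans
        (H _ j (Fin.le_def.2 (Nat.le_add_right _ _)) hjb (by dsimp only; omega))
  exact h (hreach (b.val - a.val) b (by rw [Fin.le_def] at hab; omega) le_rfl)

theorem Fin.val_add_one_eq_mod {n : ℕ} [NeZero n] (i : Fin n) :
    (i + 1 : Fin n).val = (i.val + 1) % n := by
  rw [Fin.val_add, Fin.val_one', Nat.add_mod_mod]

section Cut

variable {V : Type*} [Fintype V] [DecidableEq V]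

def cut (w : V → V → ℕ) (X : Finset V) : ℕ :=
  ∑ a ∈ X, ∑ b ∈ Xᶜ, (w a b + w b a)

variable {w : V → V → ℕ} {X : Finset V}

theorem cut_add {w₁ w₂ : V → V → ℕ} :
    cut (w₁ + w₂) X = cut w₁ X + cut w₂ X := by
  simp only [cut, Pi.add_apply, ← sum_add_distrib, add_add_add_comm]

theorem cut_add_swap :
    cut (fun a b => w a b + w b a) X = 2 * cut w X := by
  simp only [cut, mul_sum]
  exact sum_congr rfl fun _ _ => sum_congr rfl fun _ _ => by ring

theorem cut_eq_sum_prod :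
    cut w X = ∑ q ∈ X ×ˢ Xᶜ, w q.1 q.2 + ∑ q ∈ X ×ˢ Xᶜ, w q.2 q.1 := by
  rw [sum_product' X Xᶜ w, sum_product' X Xᶜ fun a b => w b a, ← sum_add_distrib]
  exact sum_congr rfl fun _ _ => sum_add_distrib

theorem two_le_cut_of_out_in {u v u' v' : V} (hu : u ∈ X) (hv : v ∉ X) (hu' : u' ∉ X)
    (hv' : v' ∈ X) (h : w u v ≠ 0) (h' : w u' v' ≠ 0) : 2 ≤ cut w X := by
  have hout := single_le_sum (f := fun q : V × V => w q.1 q.2) (fun _ _ => Nat.zero_le _)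
    (mem_product.2 ⟨hu, mem_compl.2 hv⟩ : (u, v) ∈ X ×ˢ Xᶜ)
  have hin := single_le_sum (f := fun q : V × V => w q.2 q.1) (fun _ _ => Nat.zero_le _)
    (mem_product.2 ⟨hv', mem_compl.2 hu'⟩ : (v', u') ∈ X ×ˢ Xᶜ)
  rw [cut_eq_sum_prod]
  dsimp only at hout hin
  omega

theorem two_le_cut_of_cycle {N : ℕ} [NeZero N] (f : Fin N → V)
    (hf : ∀ l, w (f l) (f (l + 1)) ≠ 0) {a b : Fin N} (ha : f a ∈ X) (hb : f b ∉ X) :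
    2 ≤ cut w X := by
  obtain ⟨l, hl, hl'⟩ := Fin.exists_cycle_step (P := (f · ∈ X)) ha hb
  obtain ⟨m, hm, hm'⟩ := Fin.exists_cycle_step (P := (f · ∉ X)) hb (not_not.2 ha)
  exact two_le_cut_of_out_in hl hl' hm (not_not.1 hm') (hf l) (hf m)

theorem cut_eq_two_mul_of_symm (hw : ∀ a b, w a b = w b a) :
    cut w X = 2 * ∑ q ∈ X ×ˢ Xᶜ, w q.1 q.2 := by
  rw [cut_eq_sum_prod, two_mul]
  simp only [hw _ _]

theorem exists_mem_prod_compl_of_symm (hw : ∀ a b, w a b = w b a) {u v : V}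
    (h : ¬(u ∈ X ↔ v ∈ X)) :
    ∃ q ∈ X ×ˢ Xᶜ, s(q.1, q.2) = s(u, v) ∧ w q.1 q.2 = w u v := by
  by_cases hu : u ∈ X
  · exact ⟨(u, v), by simp_all, rfl, rfl⟩
  · exact ⟨(v, u), by simp_all, Sym2.eq_swap, hw v u⟩

theorem two_le_cut_of_symm (hw : ∀ a b, w a b = w b a) {u v : V} (h : ¬(u ∈ X ↔ v ∈ X))
    (huv : w u v ≠ 0) : 2 ≤ cut w X := by
  obtain ⟨q, hq, -, hwq⟩ := exists_mem_prod_compl_of_symm hw h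
  have := single_le_sum (f := fun q : V × V => w q.1 q.2) (fun _ _ => Nat.zero_le _) hq
  rw [cut_eq_two_mul_of_symm hw]
  omega

theorem four_le_cut_of_symm (hw : ∀ a b, w a b = w b a) {u v u' v' : V}
    (h : ¬(u ∈ X ↔ v ∈ X)) (h' : ¬(u' ∈ X ↔ v' ∈ X)) (huv : w u v ≠ 0)
    (huv' : w u' v' ≠ 0) (hne : s(u, v) ≠ s(u', v')) : 4 ≤ cut w X := by
  obtain ⟨q, hq, hsq, hwq⟩ := exists_mem_prod_compl_of_symm hw h
  obtain ⟨q', hq', hsq', hwq'⟩ := exists_mem_prod_compl_of_symm hw h'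
  have hqq' : q ≠ q' := by rintro rfl; exact hne (hsq.symm.trans hsq')
  have := add_le_sum (f := fun q : V × V => w q.1 q.2) (fun _ _ => Nat.zero_le _) hq hq' hqq'
  rw [cut_eq_two_mul_of_symm hw]
  omega

end Cut

section PartVert

variable {k : ℕ} (p : Fin k → ℕ)

def pathArcMult (a b : PartVert k p) : ℕ :=
  if a.1 = b.1 ∧ (b.2.val = a.2.val + 1 ∨ a.2.val = b.2.val + 1) then 1 else 0

def firstArcMult (a b : PartVert k p) : ℕ :=
  if a.2.val = 0 ∧ b.2.val = 0 ∧ b.1.val = (a.1.val + 1) % k then 1 else 0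

def lastArcMult (a b : PartVert k p) : ℕ :=
  if a.2.val = p a.1 - 1 ∧ b.2.val = p b.1 - 1 ∧ b.1.val = (a.1.val + 1) % k then 1 else 0

def cycleArcMult (a b : PartVert k p) : ℕ :=
  if b.2.val = (a.2.val + 1) % p a.1 then 1 else 0

theorem arcMult_of_ne_one (hk : k ≠ 1) :
    arcMult p = pathArcMult p + firstArcMult p + lastArcMult p := by
  funext a b
  rw [arcMult, if_neg hk]
  rfl

theorem arcMult_of_eq_one (p : Fin 1 → ℕ) :
    arcMult p = fun a b => cycleArcMult p a b + cycleArcMult p b a := by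
  funext a b
  rw [arcMult, if_pos rfl]
  rfl

variable {p}

def firstVert (hp : ∀ i, 0 < p i) (i : Fin k) : PartVert k p := ⟨i, ⟨0, hp i⟩⟩

def lastVert (hp : ∀ i, 0 < p i) (i : Fin k) : PartVert k p :=
  ⟨i, ⟨p i - 1, Nat.sub_one_lt_of_lt (hp i)⟩⟩

theorem pathArcMult_comm (a b : PartVert k p) : pathArcMult p a b = pathArcMult p b a := by
  simp only [pathArcMult, eq_comm, or_comm]

theorem pathArcMult_ne_zero {i : Fin k} {j j' : Fin (p i)} (h : j'.val = j.val + 1) :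
    pathArcMult p ⟨i, j⟩ ⟨i, j'⟩ ≠ 0 := by
  simp [pathArcMult, h]

variable {X : Finset (PartVert k p)}

theorem two_le_cut_firstArcMult (hp : ∀ i, 0 < p i) {i i' : Fin k} (hi : firstVert hp i ∈ X)
    (hi' : firstVert hp i' ∉ X) : 2 ≤ cut (firstArcMult p) X := by
  have : NeZero k := NeZero.of_pos i.pos
  refine two_le_cut_of_cycle (firstVert hp) (fun l => ?_) hi hi'
  simp [firstArcMult, firstVert, Fin.val_add_one_eq_mod]

theorem two_le_cut_lastArcMult (hp : ∀ i, 0 < p i) {i i' : Fin k} (hi : lastVert hp i ∈ X)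
    (hi' : lastVert hp i' ∉ X) : 2 ≤ cut (lastArcMult p) X := by
  have : NeZero k := NeZero.of_pos i.pos
  refine two_le_cut_of_cycle (lastVert hp) (fun l => ?_) hi hi'
  simp [lastArcMult, lastVert, Fin.val_add_one_eq_mod]

theorem two_le_cut_pathArcMult (hp : ∀ i, 0 < p i) {i : Fin k}
    (hi : ¬(firstVert hp i ∈ X ↔ lastVert hp i ∈ X)) : 2 ≤ cut (pathArcMult p) X := by
  obtain ⟨j, j', -, -, hjj', hcross⟩ :=
    Fin.exists_succ_step_of_le (P := fun j => (⟨i, j⟩ : PartVert k p) ∈ X)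
      (Fin.mk_le_mk.2 (Nat.zero_le (p i - 1))) hi
  exact two_le_cut_of_symm pathArcMult_comm hcross (pathArcMult_ne_zero hjj')

theorem four_le_cut_pathArcMult_of_ne (hp : ∀ i, 0 < p i) {i i' : Fin k} (hii' : i ≠ i')
    (hi : ¬(firstVert hp i ∈ X ↔ lastVert hp i ∈ X))
    (hi' : ¬(firstVert hp i' ∈ X ↔ lastVert hp i' ∈ X)) : 4 ≤ cut (pathArcMult p) X := by
  obtain ⟨j, j', -, -, hjj', hcross⟩ :=
    Fin.exists_succ_step_of_le (P := fun j => (⟨i, j⟩ : PartVert k p) ∈ X)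
      (Fin.mk_le_mk.2 (Nat.zero_le (p i - 1))) hi
  obtain ⟨l, l', -, -, hll', hcross'⟩ :=
    Fin.exists_succ_step_of_le (P := fun j => (⟨i', j⟩ : PartVert k p) ∈ X)
      (Fin.mk_le_mk.2 (Nat.zero_le (p i' - 1))) hi'
  refine four_le_cut_of_symm pathArcMult_comm hcross hcross' (pathArcMult_ne_zero hjj')
    (pathArcMult_ne_zero hll') ?_
  intro h
  rcases Sym2.eq_iff.1 h with ⟨h, -⟩ | ⟨h, -⟩ <;>
    exact hii' (congrArg (fun v : PartVert k p => v.1) h)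

theorem four_le_cut_pathArcMult_of_bump (hp : ∀ i, 0 < p i) {i : Fin k} {j : Fin (p i)}
    (hi : firstVert hp i ∈ X ↔ lastVert hp i ∈ X)
    (hj : ¬(firstVert hp i ∈ X ↔ ⟨i, j⟩ ∈ X)) : 4 ≤ cut (pathArcMult p) X := by
  obtain ⟨l₁, l₁', -, hl₁j, hl₁, hcross₁⟩ :=
    Fin.exists_succ_step_of_le (P := fun j => (⟨i, j⟩ : PartVert k p) ∈ X)
      (a := ⟨0, hp i⟩) (b := j) (Fin.le_def.2 (Nat.zero_le _)) hj
  obtain ⟨l₂, l₂', hjl₂, -, hl₂, hcross₂⟩ :=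
    Fin.exists_succ_step_of_le (P := fun j => (⟨i, j⟩ : PartVert k p) ∈ X)
      (a := j) (b := (lastVert hp i).2) (Fin.le_def.2 (Nat.le_sub_one_of_lt j.isLt))
      (show ¬(⟨i, j⟩ ∈ X ↔ lastVert hp i ∈ X) by rw [← hi]; tauto)
  refine four_le_cut_of_symm pathArcMult_comm hcross₁ hcross₂ (pathArcMult_ne_zero hl₁)
    (pathArcMult_ne_zero hl₂) ?_
  rw [Fin.le_def] at hl₁j hjl₂
  intro h
  rcases Sym2.eq_iff.1 h with ⟨h, -⟩ | ⟨h, -⟩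
  · have : l₁.val = l₂.val := congrArg (fun v : PartVert k p => v.2.val) h
    omega
  · have : l₁.val = l₂'.val := congrArg (fun v : PartVert k p => v.2.val) h
    omega

theorem four_le_cut_of_crossing_path (hk : 2 ≤ k) (hp : ∀ i, 0 < p i) {i : Fin k}
    (hi : ¬(firstVert hp i ∈ X ↔ lastVert hp i ∈ X)) :
    4 ≤ cut (pathArcMult p) X + cut (firstArcMult p) X + cut (lastArcMult p) X := by
  have hpath := two_le_cut_pathArcMult hp hi
  by_cases hF : ∃ i i', firstVert hp i ∈ X ∧ firstVert hp i' ∉ X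
  · obtain ⟨i, i', h, h'⟩ := hF
    have := two_le_cut_firstArcMult hp h h'
    omega
  by_cases hL : ∃ i i', lastVert hp i ∈ X ∧ lastVert hp i' ∉ X
  · obtain ⟨i, i', h, h'⟩ := hL
    have := two_le_cut_lastArcMult hp h h'
    omega
  push Not at hF hL
  have : Nontrivial (Fin k) := Fin.nontrivial_iff_two_le.2 hk
  obtain ⟨i', hi'⟩ := exists_ne i
  have := four_le_cut_pathArcMult_of_ne hp hi'.symm hi
    (by have := hF i i'; have := hF i' i; have := hL i i'; have := hL i' i; tauto)
  omega

theorem four_le_cut_of_forall_not_crossing_path (hp : ∀ i, 0 < p i) {a b : PartVert k p}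
    (ha : a ∈ X) (hb : b ∉ X) (hV : ∀ i, firstVert hp i ∈ X ↔ lastVert hp i ∈ X) :
    4 ≤ cut (pathArcMult p) X + cut (firstArcMult p) X + cut (lastArcMult p) X := by
  by_cases hF : ∃ i i', firstVert hp i ∈ X ∧ firstVert hp i' ∉ X
  · obtain ⟨i, i', h, h'⟩ := hF
    have := two_le_cut_firstArcMult hp h h'
    have := two_le_cut_lastArcMult hp ((hV i).1 h) (mt (hV i').2 h')
    omega
  push Not at hF
  have hab : ¬(firstVert hp a.1 ∈ X ↔ a ∈ X) ∨ ¬(firstVert hp b.1 ∈ X ↔ b ∈ X) := by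
    have := hF a.1 b.1; have := hF b.1 a.1; tauto
  rcases hab with h | h
  · have := four_le_cut_pathArcMult_of_bump hp (hV a.1) h
    omega
  · have := four_le_cut_pathArcMult_of_bump hp (hV b.1) h
    omega

theorem four_le_cut_arcMult_of_ne_one (hk : k ≠ 1) (hp : ∀ i, 0 < p i) {a b : PartVert k p}
    (ha : a ∈ X) (hb : b ∉ X) : 4 ≤ cut (arcMult p) X := by
  rw [arcMult_of_ne_one p hk, cut_add, cut_add]
  by_cases hV : ∃ i, ¬(firstVert hp i ∈ X ↔ lastVert hp i ∈ X)
  · obtain ⟨i, hi⟩ := hV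
    exact four_le_cut_of_crossing_path (by have := a.1.pos; omega) hp hi
  · push Not at hV
    exact four_le_cut_of_forall_not_crossing_path hp ha hb hV

theorem four_le_cut_arcMult_of_eq_one {p : Fin 1 → ℕ} {X : Finset (PartVert 1 p)}
    {a b : PartVert 1 p} (ha : a ∈ X) (hb : b ∉ X) : 4 ≤ cut (arcMult p) X := by
  obtain ⟨i, j⟩ := a
  obtain ⟨i', j'⟩ := b
  obtain rfl := Subsingleton.elim i 0
  obtain rfl := Subsingleton.elim i' 0
  have : NeZero (p 0) := NeZero.of_pos j.pos
  have := two_le_cut_of_cycle (fun l : Fin (p 0) => (⟨0, l⟩ : PartVert 1 p))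
    (w := cycleArcMult p) (fun l => by simp [cycleArcMult, Fin.val_add_one_eq_mod]) ha hb
  rw [arcMult_of_eq_one, cut_add_swap]
  omega

end PartVert

theorem Deta_cut_ge_four_general (k : ℕ) (p : Fin k → ℕ)
    (hp : ∀ i, 1 ≤ p i)
    (X : Finset (PartVert k p)) (hne : X.Nonempty) (hproper : X ≠ Finset.univ) :
    4 ≤ ∑ a ∈ X, ∑ b ∈ Xᶜ, (arcMult p a b + arcMult p b a) := by
  obtain ⟨a, ha⟩ := hne
  obtain ⟨b, hb⟩ : ∃ b, b ∉ X := by simpa [eq_univ_iff_forall] using hproper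
  change 4 ≤ cut (arcMult p) X
  obtain rfl | hk := eq_or_ne k 1
  · exact four_le_cut_arcMult_of_eq_one ha hb
  · exact four_le_cut_arcMult_of_ne_one hk hp ha hb

/-- For every nonempty proper subset `X` of the vertices of `D_η`, at least `4` edges
of the underlying multigraph `G_η` (counted with multiplicity) join `X` to its
complement. -/
theorem Deta_cut_ge_four (n k : ℕ) (hn : 2 ≤ n)
    (hk : 1 ≤ k) (hkn : k ≤ n) (p : Fin k → ℕ)
    (hp : ∀ i, 1 ≤ p i) (hsum : ∑ i, p i = n)
    (X : Finset (PartVert k p)) (hne : X.Nonempty) (hproper : X ≠ Finset.univ) :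
    4 ≤ ∑ a ∈ X, ∑ b ∈ Xᶜ, (arcMult p a b + arcMult p b a) :=
  Deta_cut_ge_four_general k p hp X hne hproper
end
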